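/- Let w : ℝⁿ → ℝ be continuous and nonnegative, e : [0,∞) → ℝⁿ uniformly continuous with range in a compact set, and suppose limsup_{t→∞} w(e(t)) > ε for some ε > 0. Then there exists δ > 0 and an increasing sequence t_k with t_k + 1 < t_{k+1} such that w(e(t)) > ε/2 for all t ∈ [t_k, t_k + δ], and consequently ∫₀^∞ w(e(t)) dt = ∞. -/
import Mathlib


open MeasureTheory Filter
open scoped ENNReal

/-- If the composed function does not converge to zero, uniform continuity forces
the integral to diverge. -/
theorem stmt1 (n : ℕ) (hn : 1 ≤ n)
    (w : EuclideanSpace ℝ (Fin n) → ℝ) (e : ℝ → EuclideanSpace ℝ (Fin n))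
    (hw_cont : Continuous w) (hw_nonneg : ∀ x, 0 ≤ w x)
    (he_uc : UniformContinuousOn e (Set.Ici 0))
    (S : Set (EuclideanSpace ℝ (Fin n))) (hS : IsCompact S)
    (hrange : ∀ t ∈ Set.Ici (0 : ℝ), e t ∈ S)
    (ε : ℝ) (hε : 0 < ε)
    (hlimsup : ε < limsup (fun t => w (e t)) atTop) :
    ∃ δ > 0, ∃ t : ℕ → ℝ, (∀ k, 0 ≤ t k) ∧ (∀ k, t k + 1 < t (k + 1)) ∧
      (∀ k, ∀ s ∈ Set.Icc (t k) (t k + δ), ε / 2 < w (e s)) ∧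
      ∫⁻ s in Set.Ici (0 : ℝ), ENNReal.ofReal (w (e s)) = ⊤ := by
  -- uniform continuity of w on S
  have hwS : UniformContinuousOn w S :=
    hS.uniformContinuousOn_of_continuous hw_cont.continuousOn
  obtain ⟨δ₁, hδ₁, hw1⟩ := (Metric.uniformContinuousOn_iff.mp hwS) (ε / 2) (by positivity)
  obtain ⟨δ₂, hδ₂, he2⟩ := (Metric.uniformContinuousOn_iff.mp he_uc) δ₁ hδ₁
  -- combined modulus: if s,u ≥ 0 and dist s u < δ₂ then |w(e s) - w(e u)| < ε/2
  have hcomb : ∀ s ∈ Set.Ici (0:ℝ), ∀ u ∈ Set.Ici (0:ℝ), dist s u < δ₂ →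
      dist (w (e s)) (w (e u)) < ε / 2 := by
    intro s hs u hu hd
    exact hw1 _ (hrange s hs) _ (hrange u hu) (he2 s hs u hu hd)
  set δ : ℝ := min (δ₂ / 2) 1 with hδdef
  have hδpos : 0 < δ := lt_min (by linarith) one_pos
  have hδ1 : δ ≤ 1 := min_le_right _ _
  have hδ2 : δ < δ₂ := lt_of_le_of_lt (min_le_left _ _) (by linarith)
  -- frequently ε < w (e t)
  have hcob : IsCoboundedUnder (· ≤ ·) atTop (fun t => w (e t)) :=
    isCoboundedUnder_le_of_le atTop (fun i => hw_nonneg (e i))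
  have hfreq : ∃ᶠ x in atTop, ε < w (e x) := frequently_lt_of_lt_limsup hcob hlimsup
  have hex : ∀ T : ℝ, ∃ s, max T 0 ≤ s ∧ ε < w (e s) := by
    intro T
    obtain ⟨s, hs1, hs2⟩ := (frequently_atTop.mp hfreq) (max T 0)
    exact ⟨s, hs1, hs2⟩
  choose F hF1 hF2 using hex
  -- recursive sequence
  set t : ℕ → ℝ := fun k => Nat.rec (F 0) (fun _ prev => F (prev + 2)) k with ht
  have ht0 : ∀ k, 0 ≤ t k := by
    intro k
    cases k with
    | zero => exact le_trans (le_max_right 0 0) (hF1 0)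
    | succ m => exact le_trans (le_max_right _ 0) (hF1 (t m + 2))
  have htsucc : ∀ k, t k + 2 ≤ t (k + 1) := by
    intro k
    exact le_trans (le_max_left _ 0) (hF1 (t k + 2))
  have htw : ∀ k, ε < w (e (t k)) := by
    intro k
    cases k with
    | zero => exact hF2 0
    | succ m => exact hF2 (t m + 2)
  have htmono : StrictMono t := strictMono_nat_of_lt_succ (fun k => by
    have := htsucc k; linarith)
  -- the interval property
  have hIcc : ∀ k, ∀ s ∈ Set.Icc (t k) (t k + δ), ε / 2 < w (e s) := by
    intro k s hs
    have hs0 : (0:ℝ) ≤ s := le_trans (ht0 k) hs.1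
    have hd : dist s (t k) < δ₂ := by
      rw [Real.dist_eq, abs_of_nonneg (by linarith [hs.1])]
      have := hs.2; linarith
    have h1 := hcomb s hs0 (t k) (ht0 k) hd
    rw [Real.dist_eq] at h1
    have h2 := abs_lt.mp h1
    have h3 := htw k
    linarith [h2.1, h2.2]
  refine ⟨δ, hδpos, t, ht0, fun k => by have := htsucc k; linarith, hIcc, ?_⟩
  -- the integral diverges
  have hsub : (⋃ k, Set.Icc (t k) (t k + δ)) ⊆ Set.Ici (0:ℝ) := by
    intro x hx
    obtain ⟨k, hk⟩ := Set.mem_iUnion.mp hx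
    exact le_trans (ht0 k) hk.1
  have key : ∀ i j : ℕ, i < j → Disjoint (Set.Icc (t i) (t i + δ)) (Set.Icc (t j) (t j + δ)) := by
    intro i j h
    apply Set.disjoint_left.mpr
    intro x hx hx'
    have h1 : t i + 2 ≤ t (i + 1) := htsucc i
    have h2 : t (i + 1) ≤ t j := htmono.le_iff_le.mpr h
    have h3 : x ≤ t i + δ := hx.2
    have h4 : t j ≤ x := hx'.1
    linarith [hδ1]
  have hdisj : Pairwise (Function.onFun Disjoint (fun k => Set.Icc (t k) (t k + δ))) := by
    intro i j hij
    rcases hij.lt_or_gt with h | h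
    · exact key i j h
    · exact (key j i h).symm
  have hmeas : ∀ k : ℕ, MeasurableSet (Set.Icc (t k) (t k + δ)) :=
    fun k => measurableSet_Icc
  have hle : (∑' k : ℕ, ∫⁻ s in Set.Icc (t k) (t k + δ), ENNReal.ofReal (w (e s)))
      ≤ ∫⁻ s in Set.Ici (0:ℝ), ENNReal.ofReal (w (e s)) := by
    rw [← lintegral_iUnion hmeas hdisj]
    exact lintegral_mono_set hsub
  have hterm : ∀ k : ℕ, ENNReal.ofReal (ε / 2) * ENNReal.ofReal δ
      ≤ ∫⁻ s in Set.Icc (t k) (t k + δ), ENNReal.ofReal (w (e s)) := by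
    intro k
    have : ∫⁻ _ in Set.Icc (t k) (t k + δ), ENNReal.ofReal (ε / 2)
        ≤ ∫⁻ s in Set.Icc (t k) (t k + δ), ENNReal.ofReal (w (e s)) := by
      apply lintegral_mono_ae
      apply ae_restrict_of_forall_mem (hmeas k)
      intro x hx
      exact ENNReal.ofReal_le_ofReal (le_of_lt (hIcc k x hx))
    calc ENNReal.ofReal (ε / 2) * ENNReal.ofReal δ
        = ∫⁻ _ in Set.Icc (t k) (t k + δ), ENNReal.ofReal (ε / 2) := by
          rw [setLIntegral_const, Real.volume_Icc]
          congr 1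
          ring_nf
      _ ≤ _ := this
  have hc : (ENNReal.ofReal (ε / 2) * ENNReal.ofReal δ) ≠ 0 :=
    mul_ne_zero (ENNReal.ofReal_pos.mpr (by linarith)).ne'
      (ENNReal.ofReal_pos.mpr hδpos).ne'
  have htop : (∑' _ : ℕ, ENNReal.ofReal (ε / 2) * ENNReal.ofReal δ) = ⊤ :=
    ENNReal.tsum_const_eq_top_of_ne_zero hc
  have : (⊤ : ℝ≥0∞) ≤ ∫⁻ s in Set.Ici (0:ℝ), ENNReal.ofReal (w (e s)) := by
    calc (⊤ : ℝ≥0∞) = ∑' _ : ℕ, ENNReal.ofReal (ε / 2) * ENNReal.ofReal δ := htop.symm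
      _ ≤ ∑' k : ℕ, ∫⁻ s in Set.Icc (t k) (t k + δ), ENNReal.ofReal (w (e s)) :=
          ENNReal.tsum_le_tsum hterm
      _ ≤ _ := hle
  exact top_unique this
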